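/- arXiv:2305.07377 — 6 statements merged into one kernel-verified Lean document; each statement's English description precedes it below -/
import Mathlib

section
/- Let n ≥ 2 be an integer, 0 < α ≤ 1, and define q_k = α·k(n-k)/(n(n-1)) for integers 0 ≤ k ≤ n. Define T_0 = T_n = 0 and, for 1 ≤ k ≤ n-1, T_k = ((n-1)/α)·((n-k)(H_{n-1} - H_{n-k}) + k(H_{n-1} - H_{k-1})). Then for every 1 ≤ k ≤ n-1, the expected-hitting-time recurrence holds: T_k = 1 + q_k·T_{k+1} + q_k·T_{k-1} + (1 - 2q_k)·T_k; equivalently, q_k·(2T_k - T_{k+1} - T_{k-1}) = 1. -/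
/-- The `j`-th harmonic number `H_j = ∑_{i=1}^j 1/i` (with `H 0 = 0`). -/
noncomputable def H (j : ℕ) : ℝ := ∑ i ∈ Finset.range j, (1 : ℝ) / (i + 1)

/-!
Write `C = H_{n-1}` and `G(m) = m (C - H_m)` (`weightedHarmonicGap`). Since `k (H_k - H_{k-1}) = 1`,
the formula is `T_k = (n-1)/α · F(k)` with `F(k) = G(k) + G(n-k) + 1` (`consensusProfile`), and in
this form it also covers the boundary: `G(n) = n (H_{n-1} - H_n) = -1`, so `F(0) = F(n) = 0`.
The first difference of `G` is `G(m+1) - G(m) = C - H_m - 1`, hence `2G(m) - G(m+1) - G(m-1) = 1/m`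
and `2F(k) - F(k+1) - F(k-1) = 1/k + 1/(n-k) = n / (k (n-k))`, which is exactly `(n-1)/(α q_k)`.
-/

theorem H_succ (m : ℕ) : H (m + 1) = H m + 1 / ((m : ℝ) + 1) := by
  simp [H, Finset.sum_range_succ]

theorem succ_mul_H_succ (m : ℕ) : ((m : ℝ) + 1) * H (m + 1) = ((m : ℝ) + 1) * H m + 1 := by
  rw [H_succ]
  field_simp

noncomputable def weightedHarmonicGap (C : ℝ) (m : ℕ) : ℝ := m * (C - H m)

theorem weightedHarmonicGap_succ_sub (C : ℝ) (m : ℕ) :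
    weightedHarmonicGap C (m + 1) - weightedHarmonicGap C m = C - H m - 1 := by
  have := succ_mul_H_succ m
  simp only [weightedHarmonicGap]
  push_cast
  linear_combination -this

theorem weightedHarmonicGap_second_diff (C : ℝ) (m : ℕ) :
    2 * weightedHarmonicGap C (m + 1) - weightedHarmonicGap C (m + 2) - weightedHarmonicGap C m
      = 1 / ((m : ℝ) + 1) := by
  have h₀ := weightedHarmonicGap_succ_sub C m
  have h₁ := weightedHarmonicGap_succ_sub C (m + 1)
  have := H_succ m
  linear_combination h₀ - h₁ + this

theorem weightedHarmonicGap_H_pred_self {n : ℕ} (hn : 1 ≤ n) :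
    weightedHarmonicGap (H (n - 1)) n = -1 := by
  obtain ⟨m, rfl⟩ : ∃ m, n = m + 1 := ⟨n - 1, by omega⟩
  have := succ_mul_H_succ m
  simp only [weightedHarmonicGap, Nat.add_sub_cancel]
  push_cast
  linear_combination -this

noncomputable def consensusProfile (n k : ℕ) : ℝ :=
  weightedHarmonicGap (H (n - 1)) k + weightedHarmonicGap (H (n - 1)) (n - k) + 1

theorem consensusProfile_zero {n : ℕ} (hn : 1 ≤ n) : consensusProfile n 0 = 0 := by
  rw [consensusProfile, Nat.sub_zero, weightedHarmonicGap_H_pred_self hn]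
  simp [weightedHarmonicGap]

theorem consensusProfile_self {n : ℕ} (hn : 1 ≤ n) : consensusProfile n n = 0 := by
  rw [consensusProfile, Nat.sub_self, weightedHarmonicGap_H_pred_self hn]
  simp [weightedHarmonicGap]

theorem consensusProfile_eq {n k : ℕ} (hk : 1 ≤ k) (hkn : k ≤ n) :
    consensusProfile n k
      = ((n : ℝ) - k) * (H (n - 1) - H (n - k)) + k * (H (n - 1) - H (k - 1)) := by
  obtain ⟨j, rfl⟩ : ∃ j, k = j + 1 := ⟨k - 1, by omega⟩
  have := succ_mul_H_succ j
  simp only [consensusProfile, weightedHarmonicGap, Nat.add_sub_cancel, Nat.cast_sub hkn]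
  push_cast
  linear_combination -this

theorem consensusProfile_second_diff {n k : ℕ} (hk : 1 ≤ k) (hkn : k + 1 ≤ n) :
    2 * consensusProfile n k - consensusProfile n (k + 1) - consensusProfile n (k - 1)
      = 1 / (k : ℝ) + 1 / ((n : ℝ) - k) := by
  obtain ⟨a, rfl⟩ : ∃ a, k = a + 1 := ⟨k - 1, by omega⟩
  obtain ⟨b, rfl⟩ : ∃ b, n = a + 1 + (b + 1) := ⟨n - (a + 1) - 1, by omega⟩
  have hl := weightedHarmonicGap_second_diff (H (a + 1 + (b + 1) - 1)) a
  have hr := weightedHarmonicGap_second_diff (H (a + 1 + (b + 1) - 1)) b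
  simp only [consensusProfile, Nat.add_sub_cancel,
    show a + 1 + (b + 1) - (a + 1) = b + 1 by omega,
    show a + 1 + (b + 1) - (a + 1 + 1) = b by omega,
    show a + 1 + (b + 1) - a = b + 2 by omega]
  push_cast
  ring_nf at hl hr ⊢
  linear_combination hl + hr

theorem stmt4_general (n : ℕ) (α : ℝ) (hα0 : 0 < α)
    (q : ℕ → ℝ)
    (hq : ∀ k : ℕ, k ≤ n → q k = α * (k : ℝ) * ((n : ℝ) - (k : ℝ)) / ((n : ℝ) * ((n : ℝ) - 1)))
    (T : ℕ → ℝ) (hT0 : T 0 = 0) (hTn : T n = 0)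
    (hT : ∀ k : ℕ, 1 ≤ k → k ≤ n - 1 →
      T k = (((n : ℝ) - 1) / α) *
        (((n : ℝ) - (k : ℝ)) * (H (n - 1) - H (n - k)) + (k : ℝ) * (H (n - 1) - H (k - 1)))) :
    ∀ k : ℕ, 1 ≤ k → k ≤ n - 1 →
      T k = 1 + q k * T (k + 1) + q k * T (k - 1) + (1 - 2 * q k) * T k
      ∧ q k * (2 * T k - T (k + 1) - T (k - 1)) = 1 := by
  intro k hk hkn
  have hT_profile : ∀ j ≤ n, T j = ((n : ℝ) - 1) / α * consensusProfile n j := by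
    intro j hj
    rcases Nat.eq_zero_or_pos j with rfl | hj₀
    · rw [hT0, consensusProfile_zero (by omega), mul_zero]
    rcases eq_or_lt_of_le hj with rfl | hjn
    · rw [hTn, consensusProfile_self (by omega), mul_zero]
    rw [hT j hj₀ (by omega), consensusProfile_eq hj₀ hj]
  have key : q k * (2 * T k - T (k + 1) - T (k - 1)) = 1 := by
    have hkR : (1 : ℝ) ≤ k := by exact_mod_cast hk
    have hknR : (k : ℝ) + 1 ≤ n := by exact_mod_cast (show k + 1 ≤ n by omega)
    calc q k * (2 * T k - T (k + 1) - T (k - 1))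
        = q k * (((n : ℝ) - 1) / α) * (2 * consensusProfile n k
            - consensusProfile n (k + 1) - consensusProfile n (k - 1)) := by
          rw [hT_profile k (by omega), hT_profile (k + 1) (by omega),
            hT_profile (k - 1) (by omega)]
          ring
      _ = q k * (((n : ℝ) - 1) / α) * (1 / (k : ℝ) + 1 / ((n : ℝ) - k)) := by
          rw [consensusProfile_second_diff hk (by omega)]
      _ = 1 := by
          rw [hq k (by omega)]
          field_simp [hα0.ne', (by linarith : (k : ℝ) ≠ 0), (by linarith : (n : ℝ) - k ≠ 0),
            (by linarith : (n : ℝ) - 1 ≠ 0), (by linarith : (n : ℝ) ≠ 0)]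
          ring
  exact ⟨by linear_combination key, key⟩

/-- The explicit formula
`T_k = ((n-1)/α)·((n-k)(H_{n-1} - H_{n-k}) + k(H_{n-1} - H_{k-1}))`, with
`T_0 = T_n = 0`, satisfies the expected-hitting-time recurrence
`T_k = 1 + q_k T_{k+1} + q_k T_{k-1} + (1-2q_k) T_k`, equivalently
`q_k (2T_k - T_{k+1} - T_{k-1}) = 1`, where `q_k = α·k(n-k)/(n(n-1))`. -/
theorem stmt4 (n : ℕ) (hn : 2 ≤ n) (α : ℝ) (hα0 : 0 < α) (hα1 : α ≤ 1)
    (q : ℕ → ℝ)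
    (hq : ∀ k : ℕ, k ≤ n → q k = α * (k : ℝ) * ((n : ℝ) - (k : ℝ)) / ((n : ℝ) * ((n : ℝ) - 1)))
    (T : ℕ → ℝ) (hT0 : T 0 = 0) (hTn : T n = 0)
    (hT : ∀ k : ℕ, 1 ≤ k → k ≤ n - 1 →
      T k = (((n : ℝ) - 1) / α) *
        (((n : ℝ) - (k : ℝ)) * (H (n - 1) - H (n - k)) + (k : ℝ) * (H (n - 1) - H (k - 1)))) :
    ∀ k : ℕ, 1 ≤ k → k ≤ n - 1 →
      T k = 1 + q k * T (k + 1) + q k * T (k - 1) + (1 - 2 * q k) * T k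
      ∧ q k * (2 * T k - T (k + 1) - T (k - 1)) = 1 :=
  stmt4_general n α hα0 q hq T hT0 hTn hT
end

section
/- Let n ≥ 2 be an integer, let q_1,…,q_{n-1} be positive reals, let r > 0, and set p_i = r·q_i for i = 1,…,n-1. For integers 1 ≤ s,k ≤ n-1 write m(s,k) = min(s,k) and M(s,k) = n - max(s,k). Then [∑_{s=1}^{n-1} (∑_{ℓ=1}^{m(s,k)} ∏_{i=1}^{ℓ-1} q_i · ∏_{j=ℓ}^{s-1} p_j)·(∑_{ℓ=1}^{M(s,k)} ∏_{i=s+1}^{n-ℓ} q_i · ∏_{j=n-ℓ+1}^{n-1} p_j)] / [∑_{ℓ=1}^{n} ∏_{i=1}^{n-ℓ} q_i · ∏_{j=n-ℓ+1}^{n-1} p_j] = [∑_{s=1}^{n-1} q_s^{-1}·(∑_{ℓ=1}^{m(s,k)} r^{s-ℓ})·(∑_{ℓ=1}^{M(s,k)} r^{ℓ-1})] / [∑_{ℓ=1}^{n} r^{ℓ-1}]. -/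
/-! With `Q = ∏_{i=1}^{n-1} q_i`, every product `∏_{i=a+1}^{b} q_i · ∏_{j=b+1}^{c} p_j` in Glaz's
formula equals `r^(c-b) · ∏_{i=a+1}^{c} q_i`. Hence the denominator is `Q · ∑_ℓ r^(ℓ-1)`, and the
`s`-th summand of the numerator is the corresponding right-hand summand times
`(∏_{i<s} q_i) · (∏_{i>s} q_i) = Q / q_s`. The common factor `Q` cancels. -/

open Finset

section CommMonoid

variable {M : Type*} [CommMonoid M] {q p : ℕ → M} {r : M}

theorem prod_Ioc_mul_prod_Ioc_of_eq_mul {a b c : ℕ} (hab : a ≤ b) (hbc : b ≤ c)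
    (hp : ∀ j ∈ Ioc b c, p j = r * q j) :
    (∏ i ∈ Ioc a b, q i) * ∏ j ∈ Ioc b c, p j = r ^ (c - b) * ∏ i ∈ Ioc a c, q i := by
  rw [prod_congr rfl hp, prod_mul_distrib, prod_const, Nat.card_Ioc, mul_left_comm,
    prod_Ioc_consecutive _ hab hbc]

theorem prod_Ioc_pred_mul_mul_prod_Ioc {a s c : ℕ} (has : a < s) (hsc : s ≤ c) :
    (∏ i ∈ Ioc a (s - 1), q i) * q s * ∏ i ∈ Ioc s c, q i = ∏ i ∈ Ioc a c, q i := by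
  obtain ⟨t, rfl⟩ := Nat.exists_eq_add_one_of_ne_zero (Nat.ne_zero_of_lt has)
  rw [Nat.add_sub_cancel, ← prod_Ioc_succ_top (by omega), prod_Ioc_consecutive _ (by omega) hsc]

theorem prod_Icc_mul_prod_Icc_eq_pow_mul {n : ℕ} (hp : ∀ i, 1 ≤ i → i ≤ n - 1 → p i = r * q i)
    {a b c : ℕ} (hab : a ≤ b) (hbc : b ≤ c) (hc : c ≤ n - 1) :
    (∏ i ∈ Icc (a + 1) b, q i) * ∏ j ∈ Icc (b + 1) c, p j = r ^ (c - b) * ∏ i ∈ Ioc a c, q i := by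
  rw [Icc_add_one_left_eq_Ioc, Icc_add_one_left_eq_Ioc]
  exact prod_Ioc_mul_prod_Ioc_of_eq_mul hab hbc fun j hj => by
    rw [mem_Ioc] at hj
    exact hp j (by omega) (by omega)

end CommMonoid

section CommSemiring

variable {R : Type*} [CommSemiring R] {q p : ℕ → R} {r : R} {n : ℕ}

theorem sum_prod_Icc_mul_prod_Icc_left (hp : ∀ i, 1 ≤ i → i ≤ n - 1 → p i = r * q i)
    {m s : ℕ} (hms : m ≤ s) (hs : s ≤ n - 1) :
    ∑ l ∈ Icc 1 m, (∏ i ∈ Icc 1 (l - 1), q i) * ∏ j ∈ Icc l (s - 1), p j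
      = (∏ i ∈ Ioc 0 (s - 1), q i) * ∑ l ∈ Icc 1 m, r ^ (s - l) := by
  rw [mul_sum]
  refine sum_congr rfl fun l hl => ?_
  obtain ⟨t, rfl⟩ : ∃ t, l = t + 1 := ⟨l - 1, by grind⟩
  rw [Nat.add_sub_cancel, prod_Icc_mul_prod_Icc_eq_pow_mul hp (Nat.zero_le t) (by grind)
    (by omega), mul_comm]
  congr 2
  omega

theorem sum_prod_Icc_mul_prod_Icc_right (hp : ∀ i, 1 ≤ i → i ≤ n - 1 → p i = r * q i)
    {m s : ℕ} (hms : m ≤ n - s) :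
    ∑ l ∈ Icc 1 m, (∏ i ∈ Icc (s + 1) (n - l), q i) * ∏ j ∈ Icc (n - l + 1) (n - 1), p j
      = (∏ i ∈ Ioc s (n - 1), q i) * ∑ l ∈ Icc 1 m, r ^ (l - 1) := by
  rw [mul_sum]
  refine sum_congr rfl fun l hl => ?_
  rw [mem_Icc] at hl
  rw [prod_Icc_mul_prod_Icc_eq_pow_mul hp (by omega) (by omega) le_rfl, mul_comm]
  congr 2
  omega

end CommSemiring

theorem stmt6_general (n : ℕ) (r : ℝ)
    (q p : ℕ → ℝ)
    (hq : ∀ i : ℕ, 1 ≤ i → i ≤ n - 1 → 0 < q i)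
    (hp : ∀ i : ℕ, 1 ≤ i → i ≤ n - 1 → p i = r * q i)
    (k : ℕ) :
    (∑ s ∈ Finset.Icc 1 (n - 1),
        (∑ l ∈ Finset.Icc 1 (min s k),
            (∏ i ∈ Finset.Icc 1 (l - 1), q i) * ∏ j ∈ Finset.Icc l (s - 1), p j) *
        (∑ l ∈ Finset.Icc 1 (n - max s k),
            (∏ i ∈ Finset.Icc (s + 1) (n - l), q i) *
              ∏ j ∈ Finset.Icc (n - l + 1) (n - 1), p j))
      / (∑ l ∈ Finset.Icc 1 n,
          (∏ i ∈ Finset.Icc 1 (n - l), q i) * ∏ j ∈ Finset.Icc (n - l + 1) (n - 1), p j)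
    = (∑ s ∈ Finset.Icc 1 (n - 1),
        (q s)⁻¹ * (∑ l ∈ Finset.Icc 1 (min s k), r ^ (s - l)) *
          ∑ l ∈ Finset.Icc 1 (n - max s k), r ^ (l - 1))
      / ∑ l ∈ Finset.Icc 1 n, r ^ (l - 1) := by
  have hQ : ∏ i ∈ Ioc 0 (n - 1), q i ≠ 0 :=
    (prod_pos fun i hi => hq i (mem_Ioc.1 hi).1 (mem_Ioc.1 hi).2).ne'
  rw [eq_comm, ← mul_div_mul_left _ _ hQ,
    ← sum_prod_Icc_mul_prod_Icc_right hp (m := n) (s := 0) le_rfl, mul_sum]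
  congr 1
  refine sum_congr rfl fun s hs => ?_
  rw [mem_Icc] at hs
  have hqs : q s ≠ 0 := (hq s hs.1 hs.2).ne'
  rw [sum_prod_Icc_mul_prod_Icc_left hp (min_le_left s k) hs.2,
    sum_prod_Icc_mul_prod_Icc_right hp (by omega), ← prod_Ioc_pred_mul_mul_prod_Ioc hs.1 hs.2]
  field_simp

/-- Glaz's explicit inversion formula for the expected absorption time of a
birth-and-death chain with up-probabilities `p_i = r·q_i` simplifies: the ratio
of sums of products of the `p_i, q_i` reduces to an expression in `r` and the
`q_s` alone. Empty products equal 1 and empty sums equal 0. -/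
theorem stmt6 (n : ℕ) (hn : 2 ≤ n) (r : ℝ) (hr : 0 < r)
    (q p : ℕ → ℝ)
    (hq : ∀ i : ℕ, 1 ≤ i → i ≤ n - 1 → 0 < q i)
    (hp : ∀ i : ℕ, 1 ≤ i → i ≤ n - 1 → p i = r * q i)
    (k : ℕ) (hk1 : 1 ≤ k) (hk : k ≤ n - 1) :
    (∑ s ∈ Finset.Icc 1 (n - 1),
        (∑ l ∈ Finset.Icc 1 (min s k),
            (∏ i ∈ Finset.Icc 1 (l - 1), q i) * ∏ j ∈ Finset.Icc l (s - 1), p j) *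
        (∑ l ∈ Finset.Icc 1 (n - max s k),
            (∏ i ∈ Finset.Icc (s + 1) (n - l), q i) *
              ∏ j ∈ Finset.Icc (n - l + 1) (n - 1), p j))
      / (∑ l ∈ Finset.Icc 1 n,
          (∏ i ∈ Finset.Icc 1 (n - l), q i) * ∏ j ∈ Finset.Icc (n - l + 1) (n - 1), p j)
    = (∑ s ∈ Finset.Icc 1 (n - 1),
        (q s)⁻¹ * (∑ l ∈ Finset.Icc 1 (min s k), r ^ (s - l)) *
          ∑ l ∈ Finset.Icc 1 (n - max s k), r ^ (l - 1))
      / ∑ l ∈ Finset.Icc 1 n, r ^ (l - 1) :=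
  stmt6_general n r q p hq hp k
end

section
/- Fix reals r ∈ (0,1) and α_{10} ∈ (0,1]. For integers n ≥ 2 and 1 ≤ k ≤ n-1 define T_k(n) = (n(n-1)/(α_{10}(1-r)(1-r^{n})))·∑_{s=1}^{n-1} (r^{max(0,s-k)} - r^{s})·(1 - r^{n-max(s,k)})/(s(n-s)). Then there exists a constant C > 0 (depending only on r and α_{10}) such that for all n ≥ 2 and all 1 ≤ k ≤ n-1, T_k(n) ≤ C·n·log n. -/
/-!
Every summand has numerator at most `1`, so the sum is at most `∑ 1 / (s (n - s))`, which by
partial fractions and the symmetry `s ↦ n - s` equals `2 H_{n-1} / n ≤ 2 (1 + log n) / n`.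
The prefactor is at most `n² / (α₁₀ (1 - r)²)` because `1 - rⁿ ≥ 1 - r`, so
`T_k(n) = O(n (1 + log n)) = O(n log n)`.
-/

open Finset Real

lemma Finset.sum_Icc_one_sub_reflect {M : Type*} [AddCommMonoid M] (f : ℕ → M) (n : ℕ) :
    ∑ s ∈ Icc 1 (n - 1), f (n - s) = ∑ s ∈ Icc 1 (n - 1), f s :=
  sum_nbij' (n - ·) (n - ·) (fun s hs => by simp only [mem_Icc] at *; omega)
    (fun s hs => by simp only [mem_Icc] at *; omega)
    (fun s hs => by simp only [mem_Icc] at *; omega)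
    (fun s hs => by simp only [mem_Icc] at *; omega)
    (fun _ _ => rfl)

lemma sum_Icc_one_div_mul_sub (n : ℕ) :
    ∑ s ∈ Icc 1 (n - 1), 1 / ((s : ℝ) * (n - s)) = 2 * harmonic (n - 1) / n := by
  calc ∑ s ∈ Icc 1 (n - 1), 1 / ((s : ℝ) * (n - s))
      = ∑ s ∈ Icc 1 (n - 1), (1 / (s : ℝ) + 1 / ((n - s : ℕ) : ℝ)) / n := by
        refine sum_congr rfl fun s hs => ?_
        obtain ⟨hs1, hsn⟩ := mem_Icc.1 hs
        have hs : (0 : ℝ) < s := by exact_mod_cast hs1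
        have hns : (0 : ℝ) < n - s := sub_pos.2 (by exact_mod_cast (by omega : s < n))
        have hn : (0 : ℝ) < n := by linarith
        rw [Nat.cast_sub (by omega)]
        field_simp
        ring
    _ = 2 * harmonic (n - 1) / n := by
        rw [← sum_div, sum_add_distrib, sum_Icc_one_sub_reflect (fun s => 1 / (s : ℝ)),
          harmonic_eq_sum_Icc]
        push_cast
        simp only [one_div]
        ring

lemma sum_Icc_one_div_mul_sub_le {n : ℕ} (hn : 2 ≤ n) :
    ∑ s ∈ Icc 1 (n - 1), 1 / ((s : ℝ) * (n - s)) ≤ 2 * (1 + log n) / n := by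
  have hlog : log ((n - 1 : ℕ) : ℝ) ≤ log n :=
    log_le_log (by exact_mod_cast (by omega : 0 < n - 1)) (by exact_mod_cast Nat.sub_le n 1)
  rw [sum_Icc_one_div_mul_sub]
  gcongr
  exact (harmonic_le_one_add_log (n - 1)).trans (by linarith)

lemma zpow_max_zero_sub_pow_mul_one_sub_pow_le_one {r : ℝ} (hr0 : 0 < r) (hr1 : r ≤ 1)
    (a : ℤ) (s m : ℕ) : (r ^ max 0 a - r ^ s) * (1 - r ^ m) ≤ 1 := by
  have h₁ := zpow_le_one₀ hr0 hr1 (le_max_left 0 a)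
  have h₂ := pow_nonneg hr0.le s
  have h₃ := pow_nonneg hr0.le m
  have h₄ := pow_le_one₀ (n := m) hr0.le hr1
  nlinarith

lemma consensus_sum_le {r : ℝ} (hr0 : 0 < r) (hr1 : r ≤ 1) {n : ℕ} (hn : 2 ≤ n) (k : ℕ) :
    ∑ s ∈ Icc 1 (n - 1),
        (r ^ (max (0 : ℤ) ((s : ℤ) - (k : ℤ))) - r ^ s) * (1 - r ^ (n - max s k)) /
          ((s : ℝ) * ((n : ℝ) - (s : ℝ)))
      ≤ 2 * (1 + log n) / n := by
  refine (sum_le_sum fun s hs => ?_).trans (sum_Icc_one_div_mul_sub_le hn)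
  have hsn : (s : ℝ) ≤ n := by exact_mod_cast (by simp only [mem_Icc] at hs; omega : s ≤ n)
  exact div_le_div_of_nonneg_right
    (zpow_max_zero_sub_pow_mul_one_sub_pow_le_one hr0 hr1 _ _ _)
    (mul_nonneg (Nat.cast_nonneg s) (by linarith))

lemma consensus_prefactor_le {r α : ℝ} (hr0 : 0 < r) (hr1 : r < 1) (hα : 0 < α) {n : ℕ}
    (hn : 1 ≤ n) :
    (n : ℝ) * ((n : ℝ) - 1) / (α * (1 - r) * (1 - r ^ n)) ≤ n ^ 2 / (α * (1 - r) ^ 2) := by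
  have hn' : (1 : ℝ) ≤ n := by exact_mod_cast hn
  have hrn : r ^ n ≤ r := pow_le_of_le_one hr0.le hr1.le (by omega)
  have hα' : 0 < α * (1 - r) := mul_pos hα (by linarith)
  apply div_le_div₀ (by positivity) (by nlinarith) (by positivity)
  nlinarith

lemma one_add_log_le_mul_log {x : ℝ} (hx : 2 ≤ x) : 1 + log x ≤ (1 + 1 / log 2) * log x := by
  have hlog2 : 0 < log 2 := log_pos one_lt_two
  have hlog : log 2 ≤ log x := log_le_log two_pos hx
  have : 1 ≤ log x / log 2 := (one_le_div hlog2).2 hlog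
  calc 1 + log x ≤ log x + log x / log 2 := by linarith
    _ = (1 + 1 / log 2) * log x := by ring

theorem stmt14_general (r α10 : ℝ) (hr0 : 0 < r) (hr1 : r < 1) (hα0 : 0 < α10) :
    ∃ C > (0 : ℝ), ∀ n : ℕ, 2 ≤ n → ∀ k : ℕ, 1 ≤ k → k ≤ n - 1 →
      ((n : ℝ) * ((n : ℝ) - 1) / (α10 * (1 - r) * (1 - r ^ n))) *
          ∑ s ∈ Finset.Icc 1 (n - 1),
            (r ^ (max (0 : ℤ) ((s : ℤ) - (k : ℤ))) - r ^ s) * (1 - r ^ (n - max s k)) /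
              ((s : ℝ) * ((n : ℝ) - (s : ℝ)))
        ≤ C * (n : ℝ) * Real.log n := by
  have hD : 0 < α10 * (1 - r) ^ 2 := mul_pos hα0 (pow_pos (by linarith) 2)
  refine ⟨2 * (1 + 1 / log 2) / (α10 * (1 - r) ^ 2), by positivity, fun n hn k _ _ => ?_⟩
  have hn' : (2 : ℝ) ≤ n := by exact_mod_cast hn
  have hprefactor_nonneg : 0 ≤ (n : ℝ) * ((n : ℝ) - 1) / (α10 * (1 - r) * (1 - r ^ n)) :=
    div_nonneg (by nlinarith) <| mul_nonneg (mul_nonneg hα0.le (by linarith))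
      (by linarith [pow_le_one₀ (n := n) hr0.le hr1.le])
  calc _ ≤ (n : ℝ) * ((n : ℝ) - 1) / (α10 * (1 - r) * (1 - r ^ n)) * (2 * (1 + log n) / n) :=
        mul_le_mul_of_nonneg_left (consensus_sum_le hr0 hr1.le hn k) hprefactor_nonneg
    _ ≤ (n : ℝ) ^ 2 / (α10 * (1 - r) ^ 2) * (2 * (1 + log n) / n) :=
        mul_le_mul_of_nonneg_right (consensus_prefactor_le hr0 hr1 hα0 (by omega)) (by positivity)
    _ = 2 / (α10 * (1 - r) ^ 2) * n * (1 + log n) := by field_simp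
    _ ≤ 2 / (α10 * (1 - r) ^ 2) * n * ((1 + 1 / log 2) * log n) := by
        gcongr; exact one_add_log_le_mul_log hn'
    _ = _ := by ring

/-- The exact expected consensus time `T_k(n)` of the biased asynchronous voter
model on the clique satisfies `T_k(n) ≤ C·n·log n` for a constant `C > 0`
depending only on `r` and `α₁₀`. -/
theorem stmt14 (r α10 : ℝ) (hr0 : 0 < r) (hr1 : r < 1) (hα0 : 0 < α10) (hα1 : α10 ≤ 1) :
    ∃ C > (0 : ℝ), ∀ n : ℕ, 2 ≤ n → ∀ k : ℕ, 1 ≤ k → k ≤ n - 1 →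
      ((n : ℝ) * ((n : ℝ) - 1) / (α10 * (1 - r) * (1 - r ^ n))) *
          ∑ s ∈ Finset.Icc 1 (n - 1),
            (r ^ (max (0 : ℤ) ((s : ℤ) - (k : ℤ))) - r ^ s) * (1 - r ^ (n - max s k)) /
              ((s : ℝ) * ((n : ℝ) - (s : ℝ)))
        ≤ C * (n : ℝ) * Real.log n :=
  stmt14_general r α10 hr0 hr1 hα0
end

section
/- Fix reals r ∈ (0,1) and α_{10} ∈ (0,1]. For integers n ≥ 2 and 1 ≤ k ≤ n-1 define T_k(n) = (n(n-1)/(α_{10}(1-r)(1-r^{n})))·∑_{s=1}^{n-1} (r^{max(0,s-k)} - r^{s})·(1 - r^{n-max(s,k)})/(s(n-s)). Then there exist a constant c > 0 and an integer N such that for every odd n ≥ N, T_{(n+1)/2}(n) ≥ c·n·log n. -/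
/-!
For `s ≤ k` the factor `r ^ max(0, s-k)` equals `1`, so the `s`-th summand is at least
`(1-r)² / (s n)`; all other summands are nonnegative. The sum is therefore at least `(1-r)²/n`
times the harmonic number `H_k ≥ log (k+1)`, and since the prefactor is at least
`n(n-1) / (α₁₀ (1-r))`, we get `T_k(n) ≥ (n-1)(1-r) log (k+1) / α₁₀`.
For `k = (n+1)/2` we have `n ≤ (k+1)²`, so `log (k+1) ≥ (log n)/2`.
-/

open Finset Real

noncomputable def consensusTerm (r : ℝ) (n k s : ℕ) : ℝ :=
  (r ^ (max (0 : ℤ) ((s : ℤ) - (k : ℤ))) - r ^ s) * (1 - r ^ (n - max s k)) /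
    ((s : ℝ) * ((n : ℝ) - (s : ℝ)))

noncomputable def consensusTime (r α10 : ℝ) (n k : ℕ) : ℝ :=
  ((n : ℝ) * ((n : ℝ) - 1) / (α10 * (1 - r) * (1 - r ^ n))) *
    ∑ s ∈ Icc 1 (n - 1), consensusTerm r n k s

lemma consensusTerm_eq (r : ℝ) (n k s : ℕ) :
    consensusTerm r n k s =
      (r ^ (s - k) - r ^ s) * (1 - r ^ (n - max s k)) / ((s : ℝ) * ((n : ℝ) - (s : ℝ))) := by
  rw [consensusTerm, show max (0 : ℤ) ((s : ℤ) - (k : ℤ)) = ((s - k : ℕ) : ℤ) by omega,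
    zpow_natCast]

section

variable {r : ℝ} {n k s : ℕ}

lemma consensusTerm_nonneg (hr0 : 0 ≤ r) (hr1 : r ≤ 1) (hsn : s ≤ n) :
    0 ≤ consensusTerm r n k s := by
  rw [consensusTerm_eq]
  have hs : (s : ℝ) ≤ n := by exact_mod_cast hsn
  have h₁ : r ^ s ≤ r ^ (s - k) := pow_le_pow_of_le_one hr0 hr1 (Nat.sub_le s k)
  have h₂ : r ^ (n - max s k) ≤ 1 := pow_le_one₀ hr0 hr1
  apply div_nonneg (mul_nonneg (by linarith) (by linarith))
  exact mul_nonneg (Nat.cast_nonneg s) (by linarith)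

lemma div_le_consensusTerm (hr0 : 0 ≤ r) (hr1 : r ≤ 1) (hs : 1 ≤ s) (hsk : s ≤ k)
    (hkn : k < n) : (1 - r) ^ 2 / (s * n) ≤ consensusTerm r n k s := by
  rw [consensusTerm_eq, Nat.sub_eq_zero_of_le hsk, pow_zero, max_eq_right hsk]
  have hs₀ : (1 : ℝ) ≤ s := by exact_mod_cast hs
  have hsn : (s : ℝ) < n := by exact_mod_cast hsk.trans_lt hkn
  have h₁ : r ^ s ≤ r := pow_le_of_le_one hr0 hr1 (by omega)
  have h₂ : r ^ (n - k) ≤ r := pow_le_of_le_one hr0 hr1 (by omega)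
  apply div_le_div₀ (by nlinarith) (by rw [sq]; gcongr; linarith)
    (by nlinarith) (by nlinarith)

lemma mul_log_le_sum_consensusTerm (hr0 : 0 ≤ r) (hr1 : r ≤ 1) (hkn : k < n) :
    (1 - r) ^ 2 / n * log (k + 1) ≤ ∑ s ∈ Icc 1 (n - 1), consensusTerm r n k s := by
  have hlog : log (k + 1) ≤ ∑ s ∈ Icc 1 k, (s : ℝ)⁻¹ := by
    simpa [harmonic_eq_sum_Icc] using log_add_one_le_harmonic k
  calc (1 - r) ^ 2 / n * log (k + 1)
      ≤ (1 - r) ^ 2 / n * ∑ s ∈ Icc 1 k, (s : ℝ)⁻¹ := by gcongr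
    _ = ∑ s ∈ Icc 1 k, (1 - r) ^ 2 / (s * n) := by
        rw [mul_sum]
        refine sum_congr rfl fun s _ => ?_
        ring
    _ ≤ ∑ s ∈ Icc 1 k, consensusTerm r n k s :=
        sum_le_sum fun s hs => by
          rw [mem_Icc] at hs
          exact div_le_consensusTerm hr0 hr1 hs.1 hs.2 hkn
    _ ≤ ∑ s ∈ Icc 1 (n - 1), consensusTerm r n k s :=
        sum_le_sum_of_subset_of_nonneg (Icc_subset_Icc_right (by omega))
          fun s hs _ => consensusTerm_nonneg hr0 hr1 (by rw [mem_Icc] at hs; omega)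

lemma mul_log_le_consensusTime {α10 : ℝ} (hr0 : 0 ≤ r) (hr1 : r < 1) (hα : 0 < α10)
    (hkn : k < n) : (n - 1) * (1 - r) / α10 * log (k + 1) ≤ consensusTime r α10 n k := by
  have hn : (1 : ℝ) ≤ n := by exact_mod_cast (show 1 ≤ n by omega)
  have hr : 0 < 1 - r := sub_pos.2 hr1
  have hrn : 0 < 1 - r ^ n := sub_pos.2 (pow_lt_one₀ hr0 hr1 (by omega))
  have hprefactor : n * (n - 1) / (α10 * (1 - r)) ≤ n * (n - 1) / (α10 * (1 - r) * (1 - r ^ n)) :=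
    div_le_div_of_nonneg_left (by nlinarith) (by positivity)
      (mul_le_of_le_one_right (by positivity) (by linarith [pow_nonneg hr0 n]))
  have hlog : 0 ≤ log ((k : ℝ) + 1) := log_nonneg (by linarith [k.cast_nonneg (α := ℝ)])
  calc (n - 1) * (1 - r) / α10 * log (k + 1)
      = n * (n - 1) / (α10 * (1 - r)) * ((1 - r) ^ 2 / n * log (k + 1)) := by
        field_simp
    _ ≤ consensusTime r α10 n k :=
        mul_le_mul hprefactor (mul_log_le_sum_consensusTerm hr0 hr1.le hkn)
          (by positivity) (by positivity)

end

lemma log_le_two_mul_log_half_add_one (n : ℕ) : log n ≤ 2 * log (((n + 1) / 2 : ℕ) + 1) := by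
  rcases Nat.eq_zero_or_pos n with rfl | hn
  · simp
  have hsq : n ≤ ((n + 1) / 2 + 1) ^ 2 := by nlinarith [Nat.lt_div_mul_add (a := n + 1) two_pos]
  calc log n ≤ log ((((n + 1) / 2 : ℕ) + 1 : ℝ) ^ 2) :=
        log_le_log (by exact_mod_cast hn) (by exact_mod_cast hsq)
    _ = 2 * log (((n + 1) / 2 : ℕ) + 1) := by rw [log_pow, Nat.cast_ofNat]

theorem stmt15_general (r α10 : ℝ) (hr0 : 0 < r) (hr1 : r < 1) (hα0 : 0 < α10) :
    ∃ c > (0 : ℝ), ∃ N : ℕ, ∀ n : ℕ, N ≤ n → Odd n →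
      c * (n : ℝ) * Real.log n ≤
        ((n : ℝ) * ((n : ℝ) - 1) / (α10 * (1 - r) * (1 - r ^ n))) *
          ∑ s ∈ Finset.Icc 1 (n - 1),
            (r ^ (max (0 : ℤ) ((s : ℤ) - (((n + 1) / 2 : ℕ) : ℤ))) - r ^ s) *
                (1 - r ^ (n - max s ((n + 1) / 2))) /
              ((s : ℝ) * ((n : ℝ) - (s : ℝ))) := by
  have hr : 0 < 1 - r := sub_pos.2 hr1
  refine ⟨(1 - r) / (4 * α10), by positivity, 2, fun n hn _ => ?_⟩
  have hn2 : (n : ℝ) ≤ 2 * (n - 1) := by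
    have : (2 : ℝ) ≤ n := by exact_mod_cast hn
    linarith
  have hlog : 0 ≤ log n := log_natCast_nonneg n
  change _ ≤ consensusTime r α10 n ((n + 1) / 2)
  calc (1 - r) / (4 * α10) * n * log n
      ≤ (1 - r) / (4 * α10) * (2 * (n - 1)) * (2 * log (((n + 1) / 2 : ℕ) + 1)) :=
        mul_le_mul (by gcongr) (log_le_two_mul_log_half_add_one n) hlog
          (mul_nonneg (by positivity) (by linarith))
    _ = (n - 1) * (1 - r) / α10 * log (((n + 1) / 2 : ℕ) + 1) := by
        field_simp
        ring
    _ ≤ consensusTime r α10 n ((n + 1) / 2) :=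
        mul_log_le_consensusTime hr0.le hr1 hα0 (by omega)

/-- The `O(n log n)` upper bound on the expected consensus time of the biased
asynchronous voter model on the clique is asymptotically tight: for
`k = (n+1)/2` (with `n` odd), `T_k(n) ≥ c·n·log n` for all large enough `n`. -/
theorem stmt15 (r α10 : ℝ) (hr0 : 0 < r) (hr1 : r < 1) (hα0 : 0 < α10) (hα1 : α10 ≤ 1) :
    ∃ c > (0 : ℝ), ∃ N : ℕ, ∀ n : ℕ, N ≤ n → Odd n →
      c * (n : ℝ) * Real.log n ≤
        ((n : ℝ) * ((n : ℝ) - 1) / (α10 * (1 - r) * (1 - r ^ n))) *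
          ∑ s ∈ Finset.Icc 1 (n - 1),
            (r ^ (max (0 : ℤ) ((s : ℤ) - (((n + 1) / 2 : ℕ) : ℤ))) - r ^ s) *
                (1 - r ^ (n - max s ((n + 1) / 2))) /
              ((s : ℝ) * ((n : ℝ) - (s : ℝ))) :=
  stmt15_general r α10 hr0 hr1 hα0
end

section
/- Let n ≥ 3 be an odd integer, 0 < r < 1, set k = (n+1)/2, and define S1 and S2 as follows: S1 = (1 - r^{n-k})·(∑_{s=1}^{k-1} 1/(s(n-s)) - ∑_{s=1}^{k-1} r^{s}/(s(n-s))) and S2 = (r^{-k} - 1)·(r^{n}·∑_{s=k}^{n-1} 1/(s(n-s)) - ∑_{s=k}^{n-1} r^{s}/(s(n-s))). Then n·(S1 - S2) > (1 - 2r^{(n-1)/2})·H_{n-1} + 2(1 - r^{n})·log(1 - r) + 2(1 - r^{n})/n. -/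
open Finset Real

theorem H_sub_one_eq_sum_Ico (n : ℕ) : H (n - 1) = ∑ s ∈ Ico 1 n, 1 / (s : ℝ) := by
  rw [H, sum_Ico_eq_sum_range]
  refine sum_congr rfl fun i _ => ?_
  push_cast
  ring

theorem mul_div_mul_sub_eq_div_add_div {N s : ℝ} (a : ℝ) (hs : s ≠ 0) (hNs : N - s ≠ 0) :
    N * (a / (s * (N - s))) = a / s + a / (N - s) := by
  field_simp
  ring

theorem sum_Ico_reflect_natCast_sub {M : Type*} [AddCommMonoid M] (F : ℝ → M) (a : ℕ)
    {b n : ℕ} (hb : b ≤ n + 1) :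
    ∑ s ∈ Ico a b, F ((n : ℝ) - s) = ∑ s ∈ Ico (n + 1 - b) (n + 1 - a), F s := by
  rw [← sum_Ico_reflect _ _ hb]
  refine sum_congr rfl fun s hs => ?_
  rw [Nat.cast_sub (by grind)]

theorem natCast_mul_sum_Ico_one_div_mul_sub (n : ℕ) {a b : ℕ} (ha : 1 ≤ a) (hb : b ≤ n) :
    (n : ℝ) * ∑ s ∈ Ico a b, 1 / ((s : ℝ) * ((n : ℝ) - s))
      = ∑ s ∈ Ico a b, 1 / (s : ℝ)
        + ∑ s ∈ Ico (n + 1 - b) (n + 1 - a), 1 / (s : ℝ) := by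
  rw [← sum_Ico_reflect_natCast_sub (fun x => 1 / x) a (by omega), ← sum_add_distrib, mul_sum]
  refine sum_congr rfl fun s hs => ?_
  have hs : 1 ≤ s ∧ s < n := by grind
  have h0 : (s : ℝ) ≠ 0 := by exact_mod_cast (by omega : s ≠ 0)
  have h1 : (n : ℝ) - s ≠ 0 := sub_ne_zero.2 (by exact_mod_cast hs.2.ne')
  exact mul_div_mul_sub_eq_div_add_div 1 h0 h1

theorem natCast_mul_sum_lower_half_eq_H {n k : ℕ} (hnk : n + 1 = 2 * k) :
    (n : ℝ) * ∑ s ∈ Ico 1 k, 1 / ((s : ℝ) * ((n : ℝ) - s)) = H (n - 1) := by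
  rw [natCast_mul_sum_Ico_one_div_mul_sub n le_rfl (by omega), show n + 1 - k = k by omega,
    Nat.add_sub_cancel, sum_Ico_consecutive _ (by omega) (by omega), H_sub_one_eq_sum_Ico]

theorem natCast_mul_sum_upper_half_eq_H {n k : ℕ} (hnk : n + 1 = 2 * k) (hk : 1 ≤ k) :
    (n : ℝ) * ∑ s ∈ Ico k n, 1 / ((s : ℝ) * ((n : ℝ) - s)) = H (n - 1) := by
  rw [natCast_mul_sum_Ico_one_div_mul_sub n hk le_rfl, show n + 1 - k = k by omega,
    Nat.add_sub_cancel_left, add_comm, sum_Ico_consecutive _ (by omega) (by omega),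
    H_sub_one_eq_sum_Ico]

-- The `s = 0` term is `r ^ 0 / 0 = 0`.
theorem hasSum_pow_div_natCast {r : ℝ} (hr : |r| < 1) :
    HasSum (fun s : ℕ => r ^ s / s) (-log (1 - r)) :=
  (hasSum_nat_add_iff' 1).mp (by simpa using hasSum_pow_div_log_of_abs_lt_one hr)

theorem sum_pow_div_natCast_le_neg_log {r : ℝ} (hr0 : 0 ≤ r) (hr1 : r < 1) (T : Finset ℕ) :
    ∑ s ∈ T, r ^ s / s ≤ -log (1 - r) :=
  sum_le_hasSum T (fun _ _ => by positivity)
    (hasSum_pow_div_natCast (by rwa [abs_of_nonneg hr0]))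

theorem natCast_mul_sum_lower_half_pow_le {n k : ℕ} (hnk : n + 1 = 2 * k) {r : ℝ}
    (hr0 : 0 ≤ r) (hr1 : r < 1) :
    (n : ℝ) * ∑ s ∈ Ico 1 k, r ^ s / ((s : ℝ) * ((n : ℝ) - s)) ≤ 2 * -log (1 - r) := by
  calc (n : ℝ) * ∑ s ∈ Ico 1 k, r ^ s / ((s : ℝ) * ((n : ℝ) - s))
      ≤ 2 * ∑ s ∈ Ico 1 k, r ^ s / s := by
        rw [mul_sum, mul_sum]
        refine sum_le_sum fun s hs => ?_
        have hs : 1 ≤ s ∧ 2 * s < n + 1 := by grind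
        have h0 : (0 : ℝ) < s := by exact_mod_cast hs.1
        have h2 : 2 * (s : ℝ) ≤ n := by exact_mod_cast (by omega : 2 * s ≤ n)
        rw [mul_div_mul_sub_eq_div_add_div _ h0.ne' (by linarith)]
        have : r ^ s / ((n : ℝ) - s) ≤ r ^ s / s :=
          div_le_div_of_nonneg_left (by positivity) h0 (by linarith)
        linarith
    _ ≤ 2 * -log (1 - r) := by gcongr; exact sum_pow_div_natCast_le_neg_log hr0 hr1 _

theorem two_mul_one_sub_pow_div_lt {n k : ℕ} (hnk : n + 1 = 2 * k) (hk : 2 ≤ k) {r : ℝ}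
    (hr0 : 0 ≤ r) (hr1 : r < 1) :
    2 * (1 - r ^ n) / n < (1 - r ^ k) * (n / (k * ((n : ℝ) - k))) := by
  have hnkR : (n : ℝ) + 1 = 2 * k := by exact_mod_cast hnk
  have hkR : (2 : ℝ) ≤ k := by exact_mod_cast hk
  have hx : r ^ k < 1 := pow_lt_one₀ hr0 hr1 (by omega)
  have hsq : r ^ k * r ^ k ≤ r ^ n := by
    rw [← pow_add]; exact pow_le_pow_of_le_one hr0 hr1.le (by omega)
  have hxnn : 0 ≤ r ^ k := by positivity
  have hkn : (0 : ℝ) < k * ((n : ℝ) - k) := by nlinarith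
  have hy : 1 - r ^ n ≤ 2 * (1 - r ^ k) := by nlinarith
  have hamgm : 4 * (k * ((n : ℝ) - k)) < n * n := by nlinarith
  rw [← mul_div_assoc, div_lt_div_iff₀ (by linarith) hkn]
  nlinarith [mul_le_mul_of_nonneg_right hy hkn.le, mul_lt_mul_of_pos_left hamgm (sub_pos.2 hx)]

theorem pow_div_le_sum_Ico {n k : ℕ} (hkn : k < n) {r : ℝ} (hr0 : 0 ≤ r) :
    r ^ k / ((k : ℝ) * ((n : ℝ) - k))
      ≤ ∑ s ∈ Ico k n, r ^ s / ((s : ℝ) * ((n : ℝ) - s)) := by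
  refine single_le_sum (f := fun s : ℕ => r ^ s / ((s : ℝ) * ((n : ℝ) - s)))
    (fun s hs => ?_) (left_mem_Ico.2 hkn)
  have : (s : ℝ) ≤ n := by exact_mod_cast (mem_Ico.1 hs).2.le
  have : 0 ≤ (n : ℝ) - s := by linarith
  positivity

theorem natCast_mul_lower_part_ge {n k : ℕ} (hnk : n + 1 = 2 * k) {r : ℝ} (hr0 : 0 ≤ r)
    (hr1 : r < 1) :
    (1 - r ^ (k - 1)) * H (n - 1) - 2 * (1 - r ^ (k - 1)) * -log (1 - r)
      ≤ (n : ℝ) * ((1 - r ^ (k - 1)) * (∑ s ∈ Ico 1 k, 1 / ((s : ℝ) * ((n : ℝ) - s))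
        - ∑ s ∈ Ico 1 k, r ^ s / ((s : ℝ) * ((n : ℝ) - s)))) := by
  have hP := natCast_mul_sum_lower_half_eq_H hnk
  have hQ := mul_le_mul_of_nonneg_left (natCast_mul_sum_lower_half_pow_le hnk hr0 hr1)
    (sub_nonneg.2 (pow_le_one₀ (n := k - 1) hr0 hr1.le))
  linear_combination -(1 - r ^ (k - 1)) * hP + hQ

theorem natCast_mul_upper_part_le {n k : ℕ} (hnk : n + 1 = 2 * k) (hk : 2 ≤ k) {r : ℝ}
    (hr0 : 0 < r) (hr1 : r < 1) :
    (n : ℝ) * ((r ^ (-(k : ℤ)) - 1)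
        * (r ^ n * ∑ s ∈ Ico k n, 1 / ((s : ℝ) * ((n : ℝ) - s))
        - ∑ s ∈ Ico k n, r ^ s / ((s : ℝ) * ((n : ℝ) - s))))
      ≤ (r ^ (k - 1) - r ^ n) * H (n - 1) - (1 - r ^ k) * (n / (k * ((n : ℝ) - k))) := by
  have hzn : r ^ (-(k : ℤ)) * r ^ n = r ^ (k - 1) := by
    rw [← zpow_natCast, ← zpow_natCast, ← zpow_add₀ hr0.ne']; congr 1; omega
  have hzk : r ^ (-(k : ℤ)) * r ^ k = 1 := by
    rw [← zpow_natCast, ← zpow_add₀ hr0.ne', neg_add_cancel, zpow_zero]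
  have hz : 1 ≤ r ^ (-(k : ℤ)) := one_le_zpow_of_nonpos₀ hr0 hr1.le (by omega)
  have hY := mul_le_mul_of_nonneg_left (pow_div_le_sum_Ico (n := n) (k := k) (by omega) hr0.le)
    (mul_nonneg (sub_nonneg.2 hz) (Nat.cast_nonneg n))
  have hR := natCast_mul_sum_upper_half_eq_H hnk (by omega)
  linear_combination (r ^ (-(k : ℤ)) - 1) * r ^ n * hR + H (n - 1) * hzn + hY
    - (n / (k * ((n : ℝ) - k))) * hzk

/-- For odd `n ≥ 3` and `k = (n+1)/2`, the quantity `n·(S1 - S2)` is bounded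
below by `(1 - 2r^{(n-1)/2})·H_{n-1} + 2(1 - r^n)·log(1-r) + 2(1 - r^n)/n`. -/
theorem stmt16 (n : ℕ) (hn : 3 ≤ n) (hodd : Odd n)
    (r : ℝ) (hr0 : 0 < r) (hr1 : r < 1)
    (k : ℕ) (hk : k = (n + 1) / 2)
    (S1 S2 : ℝ)
    (hS1 : S1 = (1 - r ^ (n - k)) *
      ((∑ s ∈ Finset.Icc 1 (k - 1), (1 : ℝ) / ((s : ℝ) * ((n : ℝ) - (s : ℝ))))
        - ∑ s ∈ Finset.Icc 1 (k - 1), r ^ s / ((s : ℝ) * ((n : ℝ) - (s : ℝ)))))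
    (hS2 : S2 = (r ^ (-(k : ℤ)) - 1) *
      (r ^ n * (∑ s ∈ Finset.Icc k (n - 1), (1 : ℝ) / ((s : ℝ) * ((n : ℝ) - (s : ℝ))))
        - ∑ s ∈ Finset.Icc k (n - 1), r ^ s / ((s : ℝ) * ((n : ℝ) - (s : ℝ))))) :
    (n : ℝ) * (S1 - S2)
      > (1 - 2 * r ^ ((n - 1) / 2)) * H (n - 1)
        + 2 * (1 - r ^ n) * Real.log (1 - r)
        + 2 * (1 - r ^ n) / (n : ℝ) := by
  obtain ⟨hnk, hk2⟩ : n + 1 = 2 * k ∧ 2 ≤ k := by obtain ⟨m, rfl⟩ := hodd; omega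
  have hlow : Icc 1 (k - 1) = Ico 1 k := by ext; simp only [mem_Icc, mem_Ico]; omega
  have hup : Icc k (n - 1) = Ico k n := by ext; simp only [mem_Icc, mem_Ico]; omega
  rw [show n - k = k - 1 by omega, hlow] at hS1
  rw [hup] at hS2
  rw [show (n - 1) / 2 = k - 1 by omega]
  have hnS1 := hS1 ▸ natCast_mul_lower_part_ge hnk hr0.le hr1
  have hnS2 := hS2 ▸ natCast_mul_upper_part_le hnk hk2 hr0 hr1
  have hgap := two_mul_one_sub_pow_div_lt hnk hk2 hr0.le hr1
  have hyu : r ^ n ≤ r ^ (k - 1) := pow_le_pow_of_le_one hr0.le hr1.le (by omega)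
  have hL : 0 ≤ -log (1 - r) := neg_nonneg.2 (log_nonpos (by linarith) (by linarith))
  have hH : 0 ≤ H (n - 1) := sum_nonneg fun i _ => by positivity
  linarith [mul_nonneg (pow_nonneg hr0.le n) hH, mul_nonneg (sub_nonneg.2 hyu) hL]
end

section
/- Let n ≥ 1 be an integer and m ≥ 1 a real number. Then ∑_{t=0}^{∞} min(1, n·e^{-(t-1)/m}) < 2 + m·log n + m. -/
/-!
Write `n e^{-(t-1)/m} = e^{-(t-s)/m}` with `s = m log n + 1`. The first `K = ⌊s⌋ + 1` terms are
at most `1` each; from `K` on the terms are bounded by a geometric series with ratio `q = e^{-1/m}`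
starting at `e^{-θ/m}`, where `θ = K - s ∈ (0, 1]`. Convexity of `exp` gives
`e^{-θ/m} ≤ 1 - θ + θ q`, so the tail is at most `(1 - q)⁻¹ - θ` and the whole sum at most
`s + (1 - q)⁻¹`. Finally `(1 - q)⁻¹ < m + 1` because `1 + 1/m < e^{1/m}`.
-/

open Real Finset

namespace Real

theorem exp_mul_le_one_sub_add_mul_exp {θ : ℝ} (hθ₀ : 0 ≤ θ) (hθ₁ : θ ≤ 1) (x : ℝ) :
    exp (θ * x) ≤ 1 - θ + θ * exp x := by
  have h := convexOn_exp.2 (Set.mem_univ 0) (Set.mem_univ x) (sub_nonneg.2 hθ₁) hθ₀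
    (sub_add_cancel 1 θ)
  simpa only [smul_eq_mul, mul_zero, zero_add, exp_zero, mul_one] using h

theorem inv_one_sub_exp_neg_lt {x : ℝ} (hx : 0 < x) : (1 - exp (-x))⁻¹ < 1 + x⁻¹ := by
  have hexp : exp (-x) < (1 + x)⁻¹ := by
    rw [exp_neg]
    exact inv_strictAnti₀ (by positivity) (by linarith [add_one_lt_exp hx.ne'])
  have hlt : x / (1 + x) < 1 - exp (-x) := by
    have : x / (1 + x) = 1 - (1 + x)⁻¹ := by field_simp; ring
    linarith
  calc (1 - exp (-x))⁻¹ < (x / (1 + x))⁻¹ := inv_strictAnti₀ (by positivity) hlt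
    _ = 1 + x⁻¹ := by field_simp; ring

theorem tsum_min_one_exp_le {a s : ℝ} (ha : 0 < a) (hs : 0 ≤ s) :
    ∑' t : ℕ, min 1 (exp (-(a * (t - s)))) ≤ s + (1 - exp (-a))⁻¹ := by
  set q := exp (-a)
  set f : ℕ → ℝ := fun t ↦ min 1 (exp (-(a * (t - s))))
  have hq₀ : 0 ≤ q := (exp_pos _).le
  have hq₁ : q < 1 := exp_lt_one_iff.2 (neg_lt_zero.2 ha)
  have hterm : ∀ t k : ℕ, exp (-(a * ((t + k : ℕ) - s))) = exp (-(a * (k - s))) * q ^ t := by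
    intro t k
    rw [← exp_nat_mul, ← exp_add]
    push_cast
    ring_nf
  have hf_le : ∀ t k : ℕ, f (t + k) ≤ exp (-(a * (k - s))) * q ^ t := fun t k ↦
    (min_le_right _ _).trans (hterm t k).le
  have hf : Summable f := by
    refine (summable_geometric_of_lt_one hq₀ hq₁).mul_left (exp (a * s)) |>.of_nonneg_of_le
      (fun t ↦ le_min zero_le_one (exp_pos _).le) fun t ↦ ?_
    simpa using hf_le t 0
  set K := ⌊s⌋₊ + 1
  set θ : ℝ := K - s
  have hθ₀ : 0 < θ := by simp only [θ, K]; push_cast; linarith [Nat.lt_floor_add_one s]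
  have hθ₁ : θ ≤ 1 := by simp only [θ, K]; push_cast; linarith [Nat.floor_le hs]
  have hhead : ∑ t ∈ range K, f t ≤ K := by
    simpa using sum_le_sum fun t (_ : t ∈ range K) ↦ min_le_left (1 : ℝ) _
  have htail : ∑' t, f (t + K) ≤ (1 - θ + θ * q) * (1 - q)⁻¹ := by
    calc ∑' t, f (t + K) ≤ ∑' t, exp (-(a * (K - s))) * q ^ t :=
          ((summable_nat_add_iff K).2 hf).tsum_le_tsum (fun t ↦ hf_le t K)
            ((summable_geometric_of_lt_one hq₀ hq₁).mul_left _)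
      _ = exp (θ * -a) * (1 - q)⁻¹ := by
          rw [tsum_mul_left, tsum_geometric_of_lt_one hq₀ hq₁]; simp only [θ]; ring_nf
      _ ≤ (1 - θ + θ * q) * (1 - q)⁻¹ := by
          gcongr
          exact exp_mul_le_one_sub_add_mul_exp hθ₀.le hθ₁ _
  calc ∑' t, f t = ∑ t ∈ range K, f t + ∑' t, f (t + K) := (hf.sum_add_tsum_nat_add K).symm
    _ ≤ K + (1 - θ + θ * q) * (1 - q)⁻¹ := add_le_add hhead htail
    _ = s + (1 - q)⁻¹ := by
          have : 1 - q ≠ 0 := by linarith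
          simp only [θ]; field_simp; ring

end Real

/-- `∑_{t=0}^∞ min(1, n·e^{-(t-1)/m}) < 2 + m·log n + m` for integers `n ≥ 1`
and reals `m ≥ 1`. -/
theorem stmt17 (n : ℕ) (hn : 1 ≤ n) (m : ℝ) (hm : 1 ≤ m) :
    ∑' t : ℕ, min (1 : ℝ) ((n : ℝ) * Real.exp (-(((t : ℝ) - 1) / m)))
      < 2 + m * Real.log n + m := by
  have hm₀ : 0 < m := one_pos.trans_le hm
  have hn₀ : (0 : ℝ) < n := by exact_mod_cast hn
  set s := m * log n + 1
  have hs : 0 ≤ s := by positivity [log_nonneg (Nat.one_le_cast.2 hn)]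
  have hterm : ∀ t : ℕ, (n : ℝ) * exp (-((t - 1) / m)) = exp (-(m⁻¹ * (t - s))) := by
    intro t
    rw [← exp_log hn₀, ← exp_add]
    congr 1
    field_simp
    ring
  calc ∑' t : ℕ, min 1 ((n : ℝ) * exp (-((t - 1) / m)))
      = ∑' t : ℕ, min 1 (exp (-(m⁻¹ * (t - s)))) := by simp only [hterm]
    _ ≤ s + (1 - exp (-m⁻¹))⁻¹ := tsum_min_one_exp_le (inv_pos.2 hm₀) hs
    _ < s + (1 + m) := by gcongr; simpa using inv_one_sub_exp_neg_lt (inv_pos.2 hm₀)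
    _ = 2 + m * log n + m := by ring
end
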